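/- Let f : ℕ^ℕ → ℕ^ℕ be a homeomorphism onto its image Y arising from a Cantor-type scheme {Y_s} with Y_{s⌢k} covered by pairwise disjoint clopen sets, and suppose that for every s ∈ ℕ^{<ω}, any sequence of points x_k ∈ Y_{s⌢k} (k ∈ ℕ) has no convergent subsequence in ℕ^ℕ. Then Y is closed in ℕ^ℕ. -/

import Mathlib

/-- The restriction x↾m of x ∈ ℕ^ℕ, as a finite string. -/
def res (x : ℕ → ℕ) (m : ℕ) : List ℕ := List.ofFn fun i : Fin m => x i

/-- A tree on ℕ: a set of finite strings closed under initial segments. -/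
def IsTree (T : Set (List ℕ)) : Prop := ∀ s : List ℕ, ∀ n : ℕ, s ++ [n] ∈ T → s ∈ T

/-- A pruned tree: every node has an immediate successor in the tree. -/
def Pruned (T : Set (List ℕ)) : Prop := ∀ s ∈ T, ∃ n : ℕ, s ++ [n] ∈ T

/-- Finitely branching: every node has only finitely many immediate successors. -/
def FinBranching (T : Set (List ℕ)) : Prop := ∀ s ∈ T, {n : ℕ | s ++ [n] ∈ T}.Finite

/-- [T], the set of infinite branches of T. -/
def Branches (T : Set (List ℕ)) : Set (ℕ → ℕ) := {x | ∀ m : ℕ, res x m ∈ T}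

/-- tree(X), the tree of finite initial segments of elements of X. -/
def treeOf (X : Set (ℕ → ℕ)) : Set (List ℕ) := {s | ∃ x ∈ X, ∃ n : ℕ, s = res x n}

/-- The Baire interval (basic clopen set) N_t. -/
def Cyl (t : List ℕ) : Set (ℕ → ℕ) := {x | res x t.length = t}

/-- s is a branching point of T. -/
def Branching (T : Set (List ℕ)) (s : List ℕ) : Prop :=
  s ∈ T ∧ ∃ k n : ℕ, k ≠ n ∧ s ++ [k] ∈ T ∧ s ++ [n] ∈ T

/-- A perfect tree: every node extends to a branching node. -/
def PerfectTree (T : Set (List ℕ)) : Prop := ∀ s ∈ T, ∃ t, s <+: t ∧ Branching T t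

/-- X is σ-compact: a countable union of compact sets. -/
def SigmaCpt (X : Set (ℕ → ℕ)) : Prop :=
  ∃ K : ℕ → Set (ℕ → ℕ), (∀ n, IsCompact (K n)) ∧ X = ⋃ n, K n

/-- A tree on ℕ × ℕ: pairs of strings of equal length, closed under initial segments. -/
def IsTree2 (S : Set (List ℕ × List ℕ)) : Prop :=
  (∀ p ∈ S, p.1.length = p.2.length) ∧
  ∀ u v : List ℕ, ∀ n m : ℕ, (u ++ [n], v ++ [m]) ∈ S → (u, v) ∈ S

/-- The set of branches of a tree on pairs. -/
def Branches2 (S : Set (List ℕ × List ℕ)) : Set ((ℕ → ℕ) × (ℕ → ℕ)) :=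
  {p | ∀ n : ℕ, (res p.1 n, res p.2 n) ∈ S}

/-- A_{uv}: the projection of the part of [S] above the node (u,v). -/
def projAbove (S : Set (List ℕ × List ℕ)) (u v : List ℕ) : Set (ℕ → ℕ) :=
  {x | ∃ y : ℕ → ℕ, (x, y) ∈ Branches2 S ∧ res x u.length = u ∧ res y v.length = v}

/-- An ideal on ℕ containing all finite sets. -/
def IsIdealN (I : Set (Set ℕ)) : Prop :=
  ∅ ∈ I ∧ (∀ a ∈ I, ∀ b : Set ℕ, b ⊆ a → b ∈ I) ∧ (∀ a ∈ I, ∀ b ∈ I, a ∪ b ∈ I) ∧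
  ∀ a : Set ℕ, a.Finite → a ∈ I

/-- X ⊆ ℕ^ℕ is I-small: every node of tree(X) has successor set in I. -/
def ISmall (I : Set (Set ℕ)) (X : Set (ℕ → ℕ)) : Prop :=
  ∀ s ∈ treeOf X, {n : ℕ | s ++ [n] ∈ treeOf X} ∈ I

/-- X is σ-I-small: a countable union of I-small sets. -/
def SigmaISmall (I : Set (Set ℕ)) (X : Set (ℕ → ℕ)) : Prop :=
  ∃ Z : ℕ → Set (ℕ → ℕ), (∀ n, ISmall I (Z n)) ∧ X = ⋃ n, Z n

/-!
Let `f (a n) → y`. If `(a n)` has a cluster point `L`, continuity of `f` gives `y = f L`.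
Otherwise a König-type argument yields a node `s` that `a n` passes through frequently while
each immediate successor `s ++ [k]` is passed through only finitely often. Hence infinitely many
`k` carry some `a (ν k)` extending `s ++ [k]`, with `ν k → ∞`, and the points
`f (a (ν k)) ∈ Y (s ++ [k])` converge to `y`, which the divergence hypothesis forbids.
-/

open Filter Topology Set

theorem res_succ (x : ℕ → ℕ) (m : ℕ) : res x (m + 1) = res x m ++ [x m] := by
  rw [res, List.ofFn_succ']
  simp [res]

theorem mem_cyl_append_singleton {x : ℕ → ℕ} {s : List ℕ} {k : ℕ} :
    x ∈ Cyl (s ++ [k]) ↔ x ∈ Cyl s ∧ x s.length = k := by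
  simp [Cyl, res_succ]

theorem cyl_nonempty (t : List ℕ) : (Cyl t).Nonempty :=
  ⟨fun i => t.getD i 0, List.ext_getElem (by simp [res]) (by simp [res])⟩

theorem cyl_res_eq_cylinder (x : ℕ → ℕ) (m : ℕ) : Cyl (res x m) = PiNat.cylinder x m := by
  ext y
  simp [Cyl, res, PiNat.mem_cylinder_iff, List.ofFn_inj, funext_iff, Fin.forall_iff]

theorem nhds_hasBasis_cyl_res (x : ℕ → ℕ) :
    (𝓝 x).HasBasis (fun _ : ℕ => True) fun m => Cyl (res x m) := by
  simp only [cyl_res_eq_cylinder]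
  refine (PiNat.isTopologicalBasis_cylinders _).nhds_hasBasis.to_hasBasis ?_ ?_
  · rintro t ⟨⟨y, m, rfl⟩, hx⟩
    exact ⟨m, trivial, (PiNat.mem_cylinder_iff_eq.1 hx).le⟩
  · exact fun m _ => ⟨_, ⟨⟨x, m, rfl⟩, PiNat.self_mem_cylinder x m⟩, subset_rfl⟩

theorem exists_forall_res_of_forall_exists_append {P : List ℕ → Prop} (h0 : P [])
    (hP : ∀ s, P s → ∃ k, P (s ++ [k])) : ∃ L : ℕ → ℕ, ∀ m, P (res L m) := by
  choose g hg using hP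
  let node : ℕ → {s // P s} := fun m => Nat.rec ⟨[], h0⟩ (fun _ s => ⟨_, hg s.1 s.2⟩) m
  have hnode : ∀ m, res (fun i => g _ (node i).2) m = (node m).1 := by
    intro m
    induction m with
    | zero => rfl
    | succ m ih => rw [res_succ, ih]
  exact ⟨_, fun m => hnode m ▸ (node m).2⟩

theorem exists_cyl_frequently_of_forall_not_mapClusterPt {ι : Type*} {l : Filter ι} [l.NeBot]
    {a : ι → ℕ → ℕ} (h : ∀ L, ¬MapClusterPt L l a) :
    ∃ s, (∃ᶠ i in l, a i ∈ Cyl s) ∧ ∀ k, ∀ᶠ i in l, a i ∉ Cyl (s ++ [k]) := by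
  by_contra! hspread
  have h0 : ∃ᶠ i in l, a i ∈ Cyl [] := Frequently.of_forall fun i => rfl
  obtain ⟨L, hL⟩ := exists_forall_res_of_forall_exists_append h0 fun s hs => by
    simpa [not_eventually] using hspread s hs
  exact h L ((nhds_hasBasis_cyl_res L).mapClusterPt_iff_frequently.2 fun m _ => hL m)

theorem exists_strictMono_mem_cyl_append {a : ℕ → ℕ → ℕ} {s : List ℕ}
    (hs : ∃ᶠ n in atTop, a n ∈ Cyl s) (hk : ∀ k, ∀ᶠ n in atTop, a n ∉ Cyl (s ++ [k])) :
    ∃ φ ν : ℕ → ℕ, StrictMono φ ∧ Tendsto ν atTop atTop ∧ ∀ j, a (ν j) ∈ Cyl (s ++ [φ j]) := by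
  set K := {k | ∃ n, a n ∈ Cyl (s ++ [k])}
  have hK : K.Infinite := by
    intro hKfin
    have hfin : ∀ k, {n | a n ∈ Cyl (s ++ [k])}.Finite := fun k => by
      simpa [← Nat.cofinite_eq_atTop] using hk k
    refine Nat.frequently_atTop_iff_infinite.1 hs ((hKfin.biUnion fun k _ => hfin k).subset ?_)
    intro n hn
    have hn' : a n ∈ Cyl (s ++ [a n s.length]) := mem_cyl_append_singleton.2 ⟨hn, rfl⟩
    exact mem_biUnion ⟨n, hn'⟩ hn'
  choose ν hν using Nat.nth_mem_of_infinite hK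
  refine ⟨Nat.nth (· ∈ K), ν, Nat.nth_strictMono hK, ?_, hν⟩
  rw [← Nat.cofinite_eq_atTop]
  refine Function.Injective.tendsto_cofinite fun i j hij => (Nat.nth_strictMono hK).injective ?_
  rw [← (mem_cyl_append_singleton.1 (hν i)).2, ← (mem_cyl_append_singleton.1 (hν j)).2, hij]

theorem image_closed_of_divergent_scheme_general (Y : List ℕ → Set (ℕ → ℕ))
    (f : (ℕ → ℕ) → (ℕ → ℕ))
    (hint : ∀ a : ℕ → ℕ, (⋂ m : ℕ, Y (res a m)) = {f a})
    (hemb : Topology.IsEmbedding f)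
    (hnoconv : ∀ s : List ℕ, ∀ x : ℕ → (ℕ → ℕ), (∀ k : ℕ, x k ∈ Y (s ++ [k])) →
      ¬ ∃ (φ : ℕ → ℕ) (L : ℕ → ℕ), StrictMono φ ∧
        Filter.Tendsto (fun k => x (φ k)) Filter.atTop (nhds L)) :
    IsClosed (Set.range f) := by
  have mem_Y : ∀ b m, f b ∈ Y (res b m) := fun b => mem_iInter.1 ((hint b).ge rfl)
  refine IsSeqClosed.isClosed fun u y hu hy => ?_
  choose a ha using hu
  obtain rfl := funext ha
  by_cases hL : ∃ L, MapClusterPt L atTop a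
  · obtain ⟨L, hL⟩ := hL
    exact ⟨L, eq_of_nhds_neBot <|
      (hL.continuousAt_comp hemb.continuous.continuousAt).neBot.mono (inf_le_inf_left _ hy)⟩
  simp only [not_exists] at hL
  obtain ⟨s, hs, hk⟩ := exists_cyl_frequently_of_forall_not_mapClusterPt hL
  obtain ⟨φ, ν, hφ, hν, haν⟩ := exists_strictMono_mem_cyl_append hs hk
  let b := Function.extend φ (a ∘ ν) fun k => (cyl_nonempty (s ++ [k])).some
  have hb : ∀ k, b k ∈ Cyl (s ++ [k]) := by
    intro k
    by_cases hkφ : ∃ j, φ j = k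
    · obtain ⟨j, rfl⟩ := hkφ
      simpa [b, hφ.injective.extend_apply] using haν j
    · simpa [b, Function.extend_apply' _ _ _ hkφ] using (cyl_nonempty _).some_mem
  refine (hnoconv s (f ∘ b) (fun k => hb k ▸ mem_Y (b k) _) ⟨φ, y, hφ, ?_⟩).elim
  simpa [b, Function.comp_def, hφ.injective.extend_apply] using hy.comp hν

theorem image_closed_of_divergent_scheme (Y : List ℕ → Set (ℕ → ℕ))
    (f : (ℕ → ℕ) → (ℕ → ℕ))
    (hmono : ∀ s : List ℕ, ∀ i : ℕ, Y (s ++ [i]) ⊆ Y s)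
    (hdiam : ∀ s : List ℕ, ∀ x ∈ Y s, ∀ y ∈ Y s, res x s.length = res y s.length)
    (hdisj : ∀ s : List ℕ, ∃ J : ℕ → List ℕ,
      (∀ k : ℕ, Y (s ++ [k]) ⊆ Cyl (J k)) ∧
      ∀ k l : ℕ, k ≠ l → Disjoint (Cyl (J k)) (Cyl (J l)))
    (hint : ∀ a : ℕ → ℕ, (⋂ m : ℕ, Y (res a m)) = {f a})
    (hemb : Topology.IsEmbedding f)
    (hnoconv : ∀ s : List ℕ, ∀ x : ℕ → (ℕ → ℕ), (∀ k : ℕ, x k ∈ Y (s ++ [k])) →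
      ¬ ∃ (φ : ℕ → ℕ) (L : ℕ → ℕ), StrictMono φ ∧
        Filter.Tendsto (fun k => x (φ k)) Filter.atTop (nhds L)) :
    IsClosed (Set.range f) :=
  image_closed_of_divergent_scheme_general Y f hint hemb hnoconv
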